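/- Consider the three partial maps φ₁ : [0,1/2] → [0,3/4], φ₁(x) = A⁻¹(x); φ₂ : [1/2,3/4] → [1/2,7/8], φ₂(x) = B⁻¹(x); φ₃ : [3/4,1] → [1/2,1], φ₃(x) = A(x). A word over Φ = (φ₁, φ₂, φ₃) is a finite nonempty sequence of letters φ_{i_1}^{ε_1}, ..., φ_{i_k}^{ε_k} with i_j ∈ {1,2,3} and ε_j ∈ {−1, +1}; it is reduced if whenever i_j = i_{j+1} then ε_j = ε_{j+1} (no letter is immediately followed by its inverse). For a point x ∈ [0,1], say ω fixes x if, applying the letters of ω successively from the right (each application requiring the current point to lie in the domain of the corresponding partial map φ_{i}^{ε}), all applications are defined and the final value equals x. Then for every reduced word ω over Φ, the set { x ∈ [0,1] : ω fixes x } has Lebesgue measure zero. -/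

import Mathlib

/-!
Off the dyadic breakpoints the letters `φ₁, φ₂, φ₃` have disjoint domains covering `[0,1]`,
so on irrational points they glue to one map `T = gluedMap`, and each inverse letter `φᵢ⁻¹` is
the branch of `T⁻¹` landing in the domain of `φᵢ`. Applied to an irrational `x`, a reduced word
therefore first climbs the `T`-orbit `a` steps and then descends `b` steps: a letter `φⱼ` right
after `φᵢ⁻¹` would need `j = i`. Every branch of `T` is `t ↦ 2t + q` or `t ↦ t + q` with
rational `q ≥ 1/8`, so no irrational point is `T`-periodic. A fixed point gives `Tᵃ x = Tᵇ x`,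
hence `a = b ≥ 1`, and then the last climbing letter and the first descending one are mutually
inverse, which reducedness forbids. So all fixed points are rational.
-/

open scoped Classical

/-- The standard generator `A` of Thompson's group `F`. -/
noncomputable def Afun (x : ℝ) : ℝ :=
  if x ≤ 1 / 2 then x / 2 else if x ≤ 3 / 4 then x - 1 / 4 else 2 * x - 1

/-- The inverse of `Afun`. -/
noncomputable def AinvFun (y : ℝ) : ℝ :=
  if y ≤ 1 / 4 then 2 * y else if y ≤ 1 / 2 then y + 1 / 4 else (y + 1) / 2

/-- The standard generator `B` of Thompson's group `F`. -/
noncomputable def Bfun (x : ℝ) : ℝ :=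
  if x ≤ 1 / 2 then x
  else if x ≤ 3 / 4 then x / 2 + 1 / 4
  else if x ≤ 7 / 8 then x - 1 / 8
  else 2 * x - 1

/-- The inverse of `Bfun`. -/
noncomputable def BinvFun (y : ℝ) : ℝ :=
  if y ≤ 1 / 2 then y
  else if y ≤ 5 / 8 then 2 * y - 1 / 2
  else if y ≤ 3 / 4 then y + 1 / 8
  else (y + 1) / 2

/-- The domain of the letter `φ_i^ε` of the graphing `Φ = (φ₁, φ₂, φ₃)`:
`φ₁ = A⁻¹ : [0,1/2] → [0,3/4]`, `φ₂ = B⁻¹ : [1/2,3/4] → [1/2,7/8]`,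
`φ₃ = A : [3/4,1] → [1/2,1]` (`true` is the letter itself, `false` its inverse,
whose domain is the range of the letter). -/
def letterDom : Fin 3 → Bool → Set ℝ
  | 0, true => Set.Icc 0 (1 / 2)
  | 0, false => Set.Icc 0 (3 / 4)
  | 1, true => Set.Icc (1 / 2) (3 / 4)
  | 1, false => Set.Icc (1 / 2) (7 / 8)
  | 2, true => Set.Icc (3 / 4) 1
  | 2, false => Set.Icc (1 / 2) 1

/-- The map effected by the letter `φ_i^ε`. -/
noncomputable def letterFun : Fin 3 → Bool → ℝ → ℝ
  | 0, true => AinvFun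
  | 0, false => Afun
  | 1, true => BinvFun
  | 1, false => Bfun
  | 2, true => Afun
  | 2, false => AinvFun

/-- Successive (right-to-left) application of a word over `Φ` to a point: the list is in
order of application (the rightmost letter of the word comes first); the result is `none`
if at some stage the current point leaves the domain of the next letter. -/
noncomputable def applyWord : List (Fin 3 × Bool) → ℝ → Option ℝ
  | [], x => some x
  | l :: ls, x =>
      if x ∈ letterDom l.1 l.2 then applyWord ls (letterFun l.1 l.2 x) else none

/-- A word over `Φ` is reduced if no letter is immediately followed by its inverse. -/
def ReducedWord (w : List (Fin 3 × Bool)) : Prop :=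
  List.Chain' (fun l₁ l₂ => l₁.1 = l₂.1 → l₁.2 = l₂.2) w

noncomputable def gluedMap (x : ℝ) : ℝ :=
  if x < 1 / 2 then AinvFun x else if x < 3 / 4 then BinvFun x else Afun x

noncomputable def letterIndex (x : ℝ) : Fin 3 :=
  if x < 1 / 2 then 0 else if x < 3 / 4 then 1 else 2

lemma gluedMap_eq_affine (x : ℝ) :
    ∃ q : ℚ, gluedMap x = 2 * x + q ∨ (gluedMap x = x + q ∧ 1 / 8 ≤ q) := by
  unfold gluedMap AinvFun BinvFun Afun
  split_ifs
  · exact ⟨0, .inl (by simp)⟩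
  · exact ⟨1 / 4, .inr ⟨by push_cast; ring, by norm_num⟩⟩
  · exfalso; linarith
  · exact ⟨-1 / 2, .inl (by push_cast; linarith)⟩
  · exact ⟨-1 / 2, .inl (by push_cast; ring)⟩
  · exact ⟨1 / 8, .inr ⟨by push_cast; ring, by norm_num⟩⟩
  · exfalso; linarith
  · exfalso; linarith
  · exact ⟨-1, .inl (by push_cast; linarith)⟩
  · exact ⟨-1, .inl (by push_cast; ring)⟩

lemma irrational_gluedMap_iff {x : ℝ} : Irrational (gluedMap x) ↔ Irrational x := by
  obtain ⟨q, h | ⟨h, -⟩⟩ := gluedMap_eq_affine x <;> rw [h, irrational_add_ratCast_iff]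
  simpa using irrational_natCast_mul_iff (n := 2) (x := x)

lemma Irrational.gluedMap_iterate {x : ℝ} (hx : Irrational x) (n : ℕ) :
    Irrational (gluedMap^[n] x) := by
  induction n with
  | zero => exact hx
  | succ n ih => rw [Function.iterate_succ_apply']; exact irrational_gluedMap_iff.mpr ih

lemma gluedMap_iterate_eq_affine (x : ℝ) (m : ℕ) :
    ∃ (M : ℕ) (Q : ℚ), gluedMap^[m] x = 2 ^ M * x + Q ∧ (M = 0 → (m : ℚ) / 8 ≤ Q) := by
  induction m with
  | zero => exact ⟨0, 0, by simp, by simp⟩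
  | succ m ih =>
    obtain ⟨M, Q, hQ, hM⟩ := ih
    obtain ⟨q, hq | ⟨hq, hq₈⟩⟩ := gluedMap_eq_affine (gluedMap^[m] x)
    · refine ⟨M + 1, 2 * Q + q, ?_, by omega⟩
      rw [Function.iterate_succ_apply', hq, hQ]
      push_cast
      ring
    · refine ⟨M, Q + q, ?_, fun h => ?_⟩
      · rw [Function.iterate_succ_apply', hq, hQ]
        push_cast
        ring
      · push_cast
        linarith [hM h]

lemma Irrational.gluedMap_iterate_ne_self {x : ℝ} (hx : Irrational x) {m : ℕ} (hm : m ≠ 0) :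
    gluedMap^[m] x ≠ x := by
  obtain ⟨M, Q, hQ, hM⟩ := gluedMap_iterate_eq_affine x m
  intro hfix
  rw [hfix] at hQ
  rcases Nat.eq_zero_or_pos M with rfl | hM₀
  · have hQ₀ : Q = 0 := by exact_mod_cast (by linarith : (Q : ℝ) = 0)
    have : (m : ℚ) ≤ 0 := by linarith [hM rfl]
    exact hm (by exact_mod_cast this.antisymm m.cast_nonneg)
  · have h₂ : (2 : ℝ) ^ M - 1 ≠ 0 := (sub_pos.2 (one_lt_pow₀ (by norm_num) hM₀.ne')).ne'
    exact hx ⟨-Q / (2 ^ M - 1), by push_cast; field_simp; linarith⟩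

lemma Irrational.gluedMap_iterate_injective {x : ℝ} (hx : Irrational x) :
    Function.Injective (gluedMap^[·] x) := by
  intro a b hab
  wlog hle : a ≤ b generalizing a b
  · exact (this hab.symm (le_of_not_ge hle)).symm
  obtain ⟨c, rfl⟩ := Nat.exists_eq_add_of_le hle
  by_contra hc
  refine (hx.gluedMap_iterate a).gluedMap_iterate_ne_self (m := c) (by omega) ?_
  rw [← Function.iterate_add_apply, add_comm]
  exact hab.symm

lemma letterFun_true_eq_gluedMap {i : Fin 3} {x : ℝ} (hx : Irrational x)
    (hd : x ∈ letterDom i true) : letterIndex x = i ∧ letterFun i true x = gluedMap x := by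
  rcases (show x ≠ 1 / 2 by simpa using hx.ne_rat (1 / 2)).lt_or_gt with h₁ | h₁ <;>
  rcases (show x ≠ 3 / 4 by simpa using hx.ne_rat (3 / 4)).lt_or_gt with h₂ | h₂ <;>
  fin_cases i <;> obtain ⟨hd₀, hd₁⟩ := hd <;> unfold letterIndex gluedMap letterFun <;>
  split_ifs <;> first | exact ⟨rfl, rfl⟩ | (exfalso; linarith)

lemma gluedMap_letterFun_false {i : Fin 3} {x : ℝ} (hx : Irrational x)
    (hd : x ∈ letterDom i false) :
    Irrational (letterFun i false x) ∧
      gluedMap (letterFun i false x) = x ∧ letterIndex (letterFun i false x) = i := by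
  suffices h : gluedMap (letterFun i false x) = x ∧ letterIndex (letterFun i false x) = i from
    ⟨irrational_gluedMap_iff.mp (by rwa [h.1]), h⟩
  have h₁ : x ≠ 1 / 2 := by simpa using hx.ne_rat (1 / 2)
  have h₂ : x ≠ 3 / 4 := by simpa using hx.ne_rat (3 / 4)
  fin_cases i <;> obtain ⟨hd₀, hd₁⟩ := hd
  · show gluedMap (Afun x) = x ∧ letterIndex (Afun x) = 0
    have hd₁ : x < 3 / 4 := lt_of_le_of_ne hd₁ h₂
    rcases h₁.lt_or_gt with h₁ | h₁ <;>
    simp only [gluedMap, letterIndex, Afun, AinvFun] <;>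
    split_ifs <;> first | (exfalso; linarith) | exact ⟨by ring, rfl⟩
  · show gluedMap (Bfun x) = x ∧ letterIndex (Bfun x) = 1
    have h₃ : x < 7 / 8 := lt_of_le_of_ne hd₁ (by simpa using hx.ne_rat (7 / 8))
    rcases h₂.lt_or_gt with h₂ | h₂ <;>
    simp only [gluedMap, letterIndex, Bfun, BinvFun] <;>
    split_ifs <;> first | (exfalso; linarith) | exact ⟨by ring, rfl⟩
  · show gluedMap (AinvFun x) = x ∧ letterIndex (AinvFun x) = 2
    simp only [gluedMap, letterIndex, Afun, AinvFun]
    split_ifs <;> first | (exfalso; linarith) | exact ⟨by ring, rfl⟩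

lemma applyWord_cons_eq_some {l : Fin 3 × Bool} {w : List (Fin 3 × Bool)} {x y : ℝ} :
    applyWord (l :: w) x = some y ↔
      x ∈ letterDom l.1 l.2 ∧ applyWord w (letterFun l.1 l.2 x) = some y := by
  rw [applyWord]
  split_ifs with h <;> simp [h]

lemma applyWord_append (u v : List (Fin 3 × Bool)) (x : ℝ) :
    applyWord (u ++ v) x = (applyWord u x).bind (applyWord v) := by
  induction u generalizing x with
  | nil => rfl
  | cons l u ih =>
    rw [List.cons_append, applyWord, applyWord]
    split_ifs
    · exact ih _
    · rfl

lemma applyWord_of_forall_true {u : List (Fin 3 × Bool)} (hu : ∀ l ∈ u, l.2 = true)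
    {x y : ℝ} (hx : Irrational x) (h : applyWord u x = some y) :
    y = gluedMap^[u.length] x ∧
      ∀ (k : ℕ) (hk : k < u.length), u[k].1 = letterIndex (gluedMap^[k] x) := by
  induction u generalizing x with
  | nil => exact ⟨(Option.some_injective _ h).symm, nofun⟩
  | cons l u ih =>
    obtain ⟨hdom, h⟩ := applyWord_cons_eq_some.mp h
    rw [hu l List.mem_cons_self] at hdom h
    obtain ⟨hidx, hfun⟩ := letterFun_true_eq_gluedMap hx hdom
    rw [hfun] at h
    obtain ⟨rfl, hitin⟩ := ih (fun l hl => hu l (List.mem_cons_of_mem _ hl))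
      (irrational_gluedMap_iff.mpr hx) h
    refine ⟨(Function.iterate_succ_apply _ _ _).symm, fun k hk => ?_⟩
    cases k with
    | zero => exact hidx.symm
    | succ k => exact hitin k (by simpa using hk)

lemma ReducedWord.applyWord_cons_false {j : Fin 3} {v : List (Fin 3 × Bool)}
    (hred : ReducedWord ((j, false) :: v)) {z y : ℝ} (hz : Irrational z)
    (h : applyWord ((j, false) :: v) z = some y) :
    gluedMap^[v.length + 1] y = z ∧ letterIndex (gluedMap^[v.length] y) = j := by
  induction v generalizing j z with
  | nil =>
    obtain ⟨hdom, h⟩ := applyWord_cons_eq_some.mp h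
    obtain rfl := Option.some_injective _ h
    exact (gluedMap_letterFun_false hz hdom).2
  | cons l v ih =>
    obtain ⟨hdom, h⟩ := applyWord_cons_eq_some.mp h
    obtain ⟨hz', hinv, hidx⟩ := gluedMap_letterFun_false hz hdom
    obtain ⟨hrel, hred⟩ := List.isChain_cons_cons.mp hred
    obtain ⟨k, _ | _⟩ := l
    · obtain ⟨hv, -⟩ := ih hred hz' h
      rw [List.length_cons, Function.iterate_succ_apply', hv]
      exact ⟨hinv, hidx⟩
    · obtain ⟨hdom', -⟩ := applyWord_cons_eq_some.mp h
      have hkj : j = k := hidx.symm.trans (letterFun_true_eq_gluedMap hz' hdom').1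
      exact absurd (hrel hkj) Bool.false_ne_true

theorem ReducedWord.applyWord_ne_some_self {w : List (Fin 3 × Bool)} (hred : ReducedWord w)
    (hne : w ≠ []) {x : ℝ} (hx : Irrational x) : applyWord w x ≠ some x := by
  obtain ⟨u, v, rfl, hu, hv⟩ : ∃ u v, u ++ v = w ∧ (∀ l ∈ u, l.2 = true) ∧
      ∀ l ∈ v.head?, l.2 = false :=
    ⟨_, _, List.takeWhile_append_dropWhile, fun _ => List.mem_takeWhile_imp,
      fun l hl => by
        have := List.head?_dropWhile_not (·.2) w
        rwa [Option.mem_def.mp hl] at this⟩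
  intro hfix
  rw [applyWord_append, Option.bind_eq_some_iff] at hfix
  obtain ⟨z, hz, hzx⟩ := hfix
  obtain ⟨rfl, hitin⟩ := applyWord_of_forall_true hu hx hz
  obtain ⟨-, hred_v, hjunction⟩ := List.isChain_append.mp hred
  rcases v with _ | ⟨⟨j, s⟩, v⟩
  · exact hx.gluedMap_iterate_ne_self (m := u.length) (by simpa using hne)
      (Option.some_injective _ hzx)
  obtain rfl : s = false := hv _ rfl
  obtain ⟨hdesc, hidx⟩ :=
    ReducedWord.applyWord_cons_false hred_v (hx.gluedMap_iterate _) hzx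
  have hlen : v.length + 1 = u.length := hx.gluedMap_iterate_injective hdesc
  have hlast : u[v.length] ∈ u.getLast? := by
    simp [List.getLast?_eq_getElem?, ← hlen]
  have hpos : u[v.length].2 = true := hu _ (List.getElem_mem _)
  -- the last climbing letter and the first descending one both sit at `T^[v.length] x`
  have hsame : u[v.length].1 = j := (hitin _ _).trans hidx
  exact Bool.false_ne_true ((hjunction _ hlast _ rfl hsame).symm.trans hpos)

theorem statement17 (w : List (Fin 3 × Bool)) (hne : w ≠ []) (hred : ReducedWord w) :
    MeasureTheory.volume
      { x : ℝ | x ∈ Set.Icc (0 : ℝ) 1 ∧ applyWord w x = some x } = 0 := by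
  refine MeasureTheory.measure_mono_null (fun x hx => ?_)
    ((Set.countable_range ((↑) : ℚ → ℝ)).measure_zero _)
  by_contra hirr
  exact hred.applyWord_ne_some_self hne hirr hx.2
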